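/- arXiv:1408.0976 — 12 statements merged into one kernel-verified Lean document; each statement's English description precedes it below -/
import Mathlib

section
/- For any stochastic (each row sums to 1, nonnegative entries) n×n matrix A = (a_ij), the permanent satisfies Per(A) ≤ 2^n · ∏_{i,j} (1-a_ij)^{1-a_ij}. -/
open scoped BigOperators

noncomputable def perm {n : ℕ} (A : Matrix (Fin n) (Fin n) ℝ) : ℝ :=
  ∑ σ : Equiv.Perm (Fin n), ∏ i, A i (σ i)

/-!
Process the rows in the order given by a permutation `ord`; when its turn comes, row `r` picks a
column `j` that is still free with probability proportional to `a r j`. This produces `σ` with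
probability `∏ r, a r (σ r) / m r`, where `m r` is the mass of row `r` on the columns still free,
so for every order these weights sum to at most `1`. Over a uniformly random order every other row
precedes `r` with probability `1/2`, so `m r` has mean `(1 + a r (σ r)) / 2`, and AM-GM turns
the average over all orders into `∑ σ, ∏ r, 2 a r (σ r) / (1 + a r (σ r)) ≤ 1`. It remains to
bound `(1 + a r j) / 2 ≤ 2 ∏ k, (1 - a r k) ^ (1 - a r k)` for a probability vector `a r`.
-/

open Finset Real Equiv Function

namespace Real

lemma half_sub_two_thirds_le_mul_log {c : ℝ} (hc : 0 ≤ c) : c / 2 - 2 / 3 ≤ c * log c := by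
  rcases hc.eq_or_lt with rfl | hc
  · norm_num
  have htangent := one_sub_inv_le_log_of_pos (by positivity : 0 < 3 / 2 * c)
  rw [log_mul (by norm_num) hc.ne'] at htangent
  have hlog : log (3 / 2) ≤ 1 / 2 := by
    linarith [log_le_sub_one_of_pos (by norm_num : (0 : ℝ) < 3 / 2)]
  have hmul : c * (1 - (3 / 2 * c)⁻¹) = c - 2 / 3 := by field_simp
  nlinarith [mul_le_mul_of_nonneg_left htangent hc.le, mul_le_mul_of_nonneg_left hlog hc.le]

lemma log_one_sub_half_le {c : ℝ} (hc₀ : 0 ≤ c) (hc₂ : c < 2) :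
    log (1 - c / 2) ≤ log 2 + c * log c - c := by
  have := log_le_sub_one_of_pos (by linarith : 0 < 1 - c / 2)
  linarith [half_sub_two_thirds_le_mul_log hc₀, log_two_gt_d9]

lemma rpow_self_eq_exp_mul_log {x : ℝ} (hx : 0 ≤ x) : x ^ x = exp (x * log x) := by
  rcases hx.eq_or_lt with rfl | hx
  · simp
  · rw [rpow_def_of_pos hx, mul_comm]

section MeanInequalities

variable {ι : Type*} {s : Finset ι} {x : ι → ℝ}

theorem sum_log_le_card_mul_log_mean (hs : s.Nonempty) (hx : ∀ i ∈ s, 0 < x i) :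
    ∑ i ∈ s, log (x i) ≤ #s * log ((∑ i ∈ s, x i) / #s) := by
  have hcard : (0 : ℝ) < #s := by exact_mod_cast hs.card_pos
  have hjensen := strictConcaveOn_log_Ioi.concaveOn.le_map_sum (t := s) (p := x)
    (w := fun _ => (#s : ℝ)⁻¹) (fun _ _ => by positivity)
    (by rw [sum_const, nsmul_eq_mul, mul_inv_cancel₀ hcard.ne']) hx
  simp only [smul_eq_mul, ← mul_sum] at hjensen
  rw [inv_mul_eq_div, inv_mul_eq_div, div_le_iff₀ hcard] at hjensen
  linarith

theorem inv_le_sum_inv_div_card_of_sum_log_le (hs : s.Nonempty) (hx : ∀ i ∈ s, 0 < x i)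
    {G : ℝ} (hG : 0 < G) (h : ∑ i ∈ s, log (x i) ≤ #s * log G) :
    G⁻¹ ≤ (∑ i ∈ s, (x i)⁻¹) / #s := by
  have hcard : (0 : ℝ) < #s := by exact_mod_cast hs.card_pos
  have hmean : 0 < (∑ i ∈ s, (x i)⁻¹) / #s :=
    div_pos (sum_pos (fun i hi => inv_pos.2 (hx i hi)) hs) hcard
  have hjensen := sum_log_le_card_mul_log_mean hs fun i hi => inv_pos.2 (hx i hi)
  simp only [log_inv, sum_neg_distrib] at hjensen
  rw [← log_le_log_iff (inv_pos.2 hG) hmean, log_inv]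
  exact le_of_mul_le_mul_left (by linarith) hcard

end MeanInequalities

end Real

section StochasticVector

variable {ι : Type*} [Fintype ι] {a : ι → ℝ}

theorem log_one_add_div_two_le (ha : ∀ j, 0 ≤ a j) (hsum : ∑ j, a j = 1) (j₀ : ι) :
    log ((1 + a j₀) / 2) ≤ log 2 + ∑ j, (1 - a j) * log (1 - a j) := by
  classical
  have hle : ∀ j, a j ≤ 1 := fun j => hsum ▸ single_le_sum (fun j _ => ha j) (mem_univ j)
  have hrest : ∑ j ∈ univ.erase j₀, a j = 1 - a j₀ := by rw [sum_erase_eq_sub (mem_univ _), hsum]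
  have hψ : -(1 - a j₀) ≤ ∑ j ∈ univ.erase j₀, (1 - a j) * log (1 - a j) := by
    rw [← hrest, ← sum_neg_distrib]
    exact sum_le_sum fun j _ => by linarith [self_sub_one_le_mul_log (sub_nonneg.2 (hle j))]
  rw [← add_sum_erase _ _ (mem_univ j₀), show (1 + a j₀) / 2 = 1 - (1 - a j₀) / 2 by ring]
  linarith [log_one_sub_half_le (sub_nonneg.2 (hle j₀)) (by linarith [ha j₀] : 1 - a j₀ < 2)]

theorem one_add_div_two_le_two_mul_prod_rpow (ha : ∀ j, 0 ≤ a j) (hsum : ∑ j, a j = 1)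
    (j₀ : ι) : (1 + a j₀) / 2 ≤ 2 * ∏ j, (1 - a j) ^ (1 - a j) := by
  have hle : ∀ j, a j ≤ 1 := fun j => hsum ▸ single_le_sum (fun j _ => ha j) (mem_univ j)
  simp_rw [rpow_self_eq_exp_mul_log (sub_nonneg.2 (hle _))]
  rw [← exp_sum, ← exp_log (two_pos : (0 : ℝ) < 2), ← exp_add, exp_log two_pos,
    ← log_le_iff_le_exp (by linarith [ha j₀])]
  exact log_one_add_div_two_le ha hsum j₀

end StochasticVector

theorem Equiv.Perm.two_mul_card_filter_apply_lt_apply {α : Type*} [Fintype α] [LinearOrder α]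
    {i j : α} (hij : i ≠ j) : 2 * #{σ : Perm α | σ i < σ j} = (Fintype.card α).factorial := by
  have hswap : #{σ : Perm α | σ i < σ j} = #{σ : Perm α | ¬σ i < σ j} := by
    refine card_nbij' (· * swap i j) (· * swap i j) ?_ ?_ ?_ ?_ <;> intro σ <;>
      simp [swap_apply_left, swap_apply_right, mul_assoc]
    · exact le_of_lt
    · intro h
      exact h.lt_of_ne (σ.injective.ne hij.symm)
  rw [two_mul]
  nth_rw 2 [hswap]
  rw [card_filter_add_card_filter_not, card_univ, Fintype.card_perm]

section FreeMass

variable {n : ℕ} (A : Matrix (Fin n) (Fin n) ℝ)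

/-- `ord r` is the step at which row `r` is processed; as rows sum to `1`, this is the mass of
row `r` on the columns not yet taken by the rows processed before it. -/
noncomputable def freeMass (σ ord : Perm (Fin n)) (r : Fin n) : ℝ :=
  1 - ∑ r' with ord r' < ord r, A r (σ r')

variable {A}

lemma sum_erase_apply_perm_eq_one_sub (hrow : ∀ i, ∑ j, A i j = 1) (σ : Perm (Fin n)) (r : Fin n) :
    ∑ r' ∈ univ.erase r, A r (σ r') = 1 - A r (σ r) := by
  rw [sum_erase_eq_sub (mem_univ _), Equiv.sum_comp σ (A r), hrow]

theorem sum_freeMass (hrow : ∀ i, ∑ j, A i j = 1) (σ : Perm (Fin n)) (r : Fin n) :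
    ∑ ord, freeMass A σ ord r = n.factorial * ((1 + A r (σ r)) / 2) := by
  have hcount : ∀ r', (#{ord : Perm (Fin n) | ord r' < ord r} : ℝ) =
      if r' = r then 0 else (n.factorial : ℝ) / 2 := by
    intro r'
    split_ifs with h
    · simp [h]
    · rw [eq_div_iff two_ne_zero, mul_comm]
      exact_mod_cast Fintype.card_fin n ▸ Perm.two_mul_card_filter_apply_lt_apply h
  have hswap : ∑ ord : Perm (Fin n), ∑ r' with ord r' < ord r, A r (σ r') =
      ∑ r', (#{ord : Perm (Fin n) | ord r' < ord r} : ℝ) * A r (σ r') := by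
    simp_rw [sum_filter]
    rw [sum_comm]
    exact sum_congr rfl fun r' _ => by rw [← sum_filter, sum_const, nsmul_eq_mul]
  simp only [freeMass, sum_sub_distrib, sum_const, card_univ, Fintype.card_perm,
    Fintype.card_fin, nsmul_eq_mul, mul_one, hswap]
  rw [← sum_erase univ (a := r) (by simp),
    sum_congr rfl fun r' hr' => by rw [hcount, if_neg (ne_of_mem_erase hr')], ← mul_sum,
    sum_erase_apply_perm_eq_one_sub hrow]
  ring

variable (hnn : ∀ i j, 0 ≤ A i j) (hrow : ∀ i, ∑ j, A i j = 1)
include hnn hrow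

theorem apply_le_freeMass (σ ord : Perm (Fin n)) (r : Fin n) : A r (σ r) ≤ freeMass A σ ord r := by
  have hsub : ∑ r' with ord r' < ord r, A r (σ r') ≤ ∑ r' ∈ univ.erase r, A r (σ r') :=
    sum_le_sum_of_subset_of_nonneg
      (fun r' h => mem_erase.2 ⟨fun he => by simp [he] at h, mem_univ _⟩) fun r' _ _ => hnn _ _
  rw [sum_erase_apply_perm_eq_one_sub hrow] at hsub
  rw [freeMass]
  linarith

theorem sum_log_freeMass_le {σ : Perm (Fin n)} {r : Fin n} (hσ : 0 < A r (σ r)) :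
    ∑ ord, log (freeMass A σ ord r) ≤ n.factorial * log ((1 + A r (σ r)) / 2) := by
  have h := sum_log_le_card_mul_log_mean univ_nonempty
    fun ord _ => hσ.trans_le (apply_le_freeMass hnn hrow σ ord r)
  rwa [sum_freeMass hrow, card_univ, Fintype.card_perm, Fintype.card_fin,
    mul_div_cancel_left₀ _ (by positivity)] at h

end FreeMass

section SequentialSampling

variable {α : Type*} [DecidableEq α]

/-- The probability that the rows `0, 1, …, k - 1`, each choosing in turn among the columns of `T`
left free by the earlier rows with probabilities proportional to `b i`, choose `σ`. The
denominator is the free mass of row `i` only for injective `σ` with values in `T`. -/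
noncomputable def samplingWeight {k : ℕ} (b : Fin k → α → ℝ) (T : Finset α) (σ : Fin k → α) : ℝ :=
  ∏ i, b i (σ i) / (∑ j ∈ T, b i j - ∑ i' with i' < i, b i (σ i'))

lemma samplingWeight_cons {k : ℕ} (b : Fin (k + 1) → α → ℝ) {T : Finset α} {j : α} (hj : j ∈ T)
    (σ : Fin k → α) :
    samplingWeight b T (Fin.cons j σ) =
      (b 0 j / ∑ j' ∈ T, b 0 j') * samplingWeight (fun i => b i.succ) (T.erase j) σ := by
  have hfree : ∀ i : Fin k, ∑ i' with i' < i.succ, b i.succ ((Fin.cons j σ : Fin (k + 1) → α) i') =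
      b i.succ j + ∑ i' with i' < i, b i.succ (σ i') := by
    intro i
    simp [sum_filter, Fin.sum_univ_succ, Fin.succ_pos]
  simp only [samplingWeight, Fin.prod_univ_succ, Fin.cons_zero, Fin.cons_succ, hfree,
    sum_erase_eq_sub hj, sub_sub]
  simp only [Fin.not_lt_zero, filter_false, sum_empty, sub_zero, prod_div_distrib]

lemma cons_injective_and_mem_iff {k : ℕ} {T : Finset α} {j : α} {σ : Fin k → α} :
    (Injective (Fin.cons j σ : Fin (k + 1) → α) ∧ ∀ i, (Fin.cons j σ : Fin (k + 1) → α) i ∈ T) ↔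
      j ∈ T ∧ Injective σ ∧ ∀ i, σ i ∈ T.erase j := by
  simp only [Fin.cons_injective_iff, Fin.forall_fin_succ, Fin.cons_zero, Fin.cons_succ,
    mem_erase, Set.mem_range, not_exists]
  grind

theorem sum_samplingWeight_le_one [Fintype α] {k : ℕ} (b : Fin k → α → ℝ) (hb : ∀ i j, 0 ≤ b i j)
    (T : Finset α) :
    ∑ σ : Fin k → α with Injective σ ∧ ∀ i, σ i ∈ T, samplingWeight b T σ ≤ 1 := by
  induction k generalizing T with
  | zero =>
    simp only [samplingWeight, univ_eq_empty, prod_empty, sum_const, nsmul_eq_mul, mul_one]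
    exact_mod_cast (card_filter_le _ _).trans (by simp)
  | succ k ih =>
    calc ∑ σ : Fin (k + 1) → α with Injective σ ∧ ∀ i, σ i ∈ T, samplingWeight b T σ
        = ∑ j ∈ T, (b 0 j / ∑ j' ∈ T, b 0 j') *
            ∑ σ : Fin k → α with Injective σ ∧ ∀ i, σ i ∈ T.erase j,
              samplingWeight (fun i => b i.succ) (T.erase j) σ := by
          have hcons : ∀ f : (Fin (k + 1) → α) → ℝ,
              ∑ σ, f σ = ∑ j, ∑ σ : Fin k → α, f (Fin.cons j σ) := fun f => by
            rw [← (Fin.consEquiv fun _ => α).sum_comp, Fintype.sum_prod_type]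
            rfl
          rw [sum_filter, hcons, ← sum_subset (subset_univ T)]
          · refine sum_congr rfl fun j hj => ?_
            rw [mul_sum, sum_filter]
            refine sum_congr rfl fun σ _ => ?_
            simp only [cons_injective_and_mem_iff, hj, true_and, samplingWeight_cons b hj]
          · intro j _ hj
            exact sum_eq_zero fun σ _ => if_neg (by simp [cons_injective_and_mem_iff, hj])
      _ ≤ ∑ j ∈ T, b 0 j / ∑ j' ∈ T, b 0 j' :=
          sum_le_sum fun j _ => mul_le_of_le_one_right
            (div_nonneg (hb 0 j) (sum_nonneg fun j' _ => hb 0 j')) (ih _ (fun i => hb i.succ) _)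
      _ ≤ 1 := by
          rw [← sum_div]
          exact div_self_le_one _

end SequentialSampling

section Permanent

variable {n : ℕ} {A : Matrix (Fin n) (Fin n) ℝ}

lemma samplingWeight_comp_symm (hrow : ∀ i, ∑ j, A i j = 1) (σ ord : Perm (Fin n)) :
    samplingWeight (fun p => A (ord.symm p)) univ (σ ∘ ord.symm) =
      ∏ r, A r (σ r) / freeMass A σ ord r := by
  have hpred : ∀ p : Fin n, ∑ p' with p' < p, A (ord.symm p) (σ (ord.symm p')) =
      ∑ r' with ord r' < p, A (ord.symm p) (σ r') := fun p => by
    simp only [sum_filter]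
    simpa using ord.symm.sum_comp (fun r' => if ord r' < p then A (ord.symm p) (σ r') else 0)
  simp only [samplingWeight, comp_apply, hrow, hpred]
  simpa [freeMass] using ord.symm.prod_comp (fun r => A r (σ r) / freeMass A σ ord r)

theorem sum_prod_div_freeMass_le_one (hnn : ∀ i j, 0 ≤ A i j) (hrow : ∀ i, ∑ j, A i j = 1)
    (ord : Perm (Fin n)) : ∑ σ : Perm (Fin n), ∏ r, A r (σ r) / freeMass A σ ord r ≤ 1 := by
  have hsum : ∑ σ : Perm (Fin n), ∏ r, A r (σ r) / freeMass A σ ord r =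
      ∑ τ : Fin n → Fin n with Injective τ ∧ ∀ p, τ p ∈ univ,
        samplingWeight (fun p => A (ord.symm p)) univ τ := by
    refine sum_bij (fun σ _ => σ ∘ ord.symm) (fun σ _ => ?_) (fun σ₁ _ σ₂ _ h => ?_)
      (fun τ hτ => ?_) (fun σ _ => (samplingWeight_comp_symm hrow σ ord).symm)
    · simpa using σ.injective.comp ord.symm.injective
    · ext r
      simpa using congrArg Fin.val (congrFun h (ord r))
    · have hbij := Finite.injective_iff_bijective.mp (mem_filter.mp hτ).2.1
      exact ⟨Equiv.ofBijective τ hbij * ord, mem_univ _, by ext; simp⟩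
  rw [hsum]
  exact sum_samplingWeight_le_one _ (fun p j => hnn _ j) univ

theorem sum_log_prod_freeMass_le (hnn : ∀ i j, 0 ≤ A i j) (hrow : ∀ i, ∑ j, A i j = 1)
    {σ : Perm (Fin n)} (hσ : ∀ i, 0 < A i (σ i)) :
    ∑ ord : Perm (Fin n), log (∏ r, freeMass A σ ord r) ≤
      n.factorial * log (∏ i, (1 + A i (σ i)) / 2) := by
  have hfpos : ∀ ord r, 0 < freeMass A σ ord r := fun ord r =>
    (hσ r).trans_le (apply_le_freeMass hnn hrow σ ord r)
  rw [log_prod fun i _ => by linarith [hσ i], mul_sum]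
  simp_rw [log_prod fun r _ => (hfpos _ r).ne']
  rw [sum_comm]
  exact sum_le_sum fun r _ => sum_log_freeMass_le hnn hrow (hσ r)

theorem prod_div_one_add_div_two_le_mean (hnn : ∀ i j, 0 ≤ A i j) (hrow : ∀ i, ∑ j, A i j = 1)
    (σ : Perm (Fin n)) :
    ∏ i, A i (σ i) / ((1 + A i (σ i)) / 2) ≤
      (∑ ord : Perm (Fin n), ∏ r, A r (σ r) / freeMass A σ ord r) / n.factorial := by
  have hfree := apply_le_freeMass hnn hrow σ
  by_cases hpos : ∀ i, 0 < A i (σ i)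
  · have hfpos : ∀ ord r, 0 < freeMass A σ ord r := fun ord r => (hpos r).trans_le (hfree ord r)
    have hinv := inv_le_sum_inv_div_card_of_sum_log_le (s := univ)
      (x := fun ord => ∏ r, freeMass A σ ord r) (G := ∏ i, (1 + A i (σ i)) / 2) univ_nonempty
      (fun ord _ => prod_pos fun r _ => hfpos ord r) (prod_pos fun i _ => by linarith [hpos i])
      (by
        rw [card_univ, Fintype.card_perm, Fintype.card_fin]
        exact sum_log_prod_freeMass_le hnn hrow hpos)
    rw [card_univ, Fintype.card_perm, Fintype.card_fin] at hinv
    have hsplit : ∀ ord : Perm (Fin n), ∏ r, A r (σ r) / freeMass A σ ord r =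
        (∏ r, A r (σ r)) * (∏ r, freeMass A σ ord r)⁻¹ := fun ord => by
      rw [prod_div_distrib, div_eq_mul_inv]
    rw [prod_div_distrib (f := fun i => A i (σ i)), div_eq_mul_inv,
      sum_congr rfl fun ord _ => hsplit ord, ← mul_sum, mul_div_assoc]
    exact mul_le_mul_of_nonneg_left hinv (prod_nonneg fun i _ => (hpos i).le)
  · obtain ⟨i, hi⟩ := not_forall.mp hpos
    rw [prod_eq_zero (mem_univ i) (by rw [(hnn i (σ i)).antisymm' (not_lt.mp hi), zero_div])]
    exact div_nonneg (sum_nonneg fun ord _ => prod_nonneg fun r _ =>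
      div_nonneg (hnn _ _) ((hnn _ _).trans (hfree ord r))) (Nat.cast_nonneg _)

theorem sum_prod_div_one_add_div_two_le_one (hnn : ∀ i j, 0 ≤ A i j)
    (hrow : ∀ i, ∑ j, A i j = 1) :
    ∑ σ : Perm (Fin n), ∏ i, A i (σ i) / ((1 + A i (σ i)) / 2) ≤ 1 := by
  calc _ ≤ ∑ σ : Perm (Fin n),
        (∑ ord : Perm (Fin n), ∏ r, A r (σ r) / freeMass A σ ord r) / n.factorial :=
        sum_le_sum fun σ _ => prod_div_one_add_div_two_le_mean hnn hrow σ
    _ = (∑ ord : Perm (Fin n), ∑ σ : Perm (Fin n), ∏ r, A r (σ r) / freeMass A σ ord r) /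
        n.factorial := by rw [← sum_div, sum_comm]
    _ ≤ (∑ _ord : Perm (Fin n), (1 : ℝ)) / n.factorial := by
        gcongr with ord
        exact sum_prod_div_freeMass_le_one hnn hrow ord
    _ = 1 := by
        rw [sum_const, card_univ, Fintype.card_perm, Fintype.card_fin, nsmul_one,
          div_self (by positivity)]

end Permanent

theorem stmt_2 {n : ℕ} (A : Matrix (Fin n) (Fin n) ℝ)
    (hnn : ∀ i j, 0 ≤ A i j)
    (hrow : ∀ i, ∑ j, A i j = 1) :
    perm A ≤ 2 ^ n * ∏ i, ∏ j, (1 - A i j) ^ (1 - A i j) := by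
  set B : Fin n → ℝ := fun i => 2 * ∏ j, (1 - A i j) ^ (1 - A i j)
  have hB : ∀ i j, (1 + A i j) / 2 ≤ B i := fun i j =>
    one_add_div_two_le_two_mul_prod_rpow (hnn i) (hrow i) j
  have hfactor : ∀ i j, A i j ≤ A i j / ((1 + A i j) / 2) * B i := fun i j => by
    have hhalf : 0 < (1 + A i j) / 2 := by linarith [hnn i j]
    calc A i j = A i j / ((1 + A i j) / 2) * ((1 + A i j) / 2) := (div_mul_cancel₀ _ hhalf.ne').symm
      _ ≤ _ := mul_le_mul_of_nonneg_left (hB i j) (div_nonneg (hnn i j) hhalf.le)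
  calc perm A ≤ ∑ σ : Perm (Fin n), ∏ i, (A i (σ i) / ((1 + A i (σ i)) / 2) * B i) :=
        sum_le_sum fun σ _ => prod_le_prod (fun i _ => hnn i (σ i)) fun i _ => hfactor i (σ i)
    _ = (∑ σ : Perm (Fin n), ∏ i, A i (σ i) / ((1 + A i (σ i)) / 2)) * ∏ i, B i := by
        simp only [prod_mul_distrib, sum_mul]
    _ ≤ ∏ i, B i := mul_le_of_le_one_left
        (prod_nonneg fun i _ => (by linarith [hnn i i] : (0 : ℝ) ≤ (1 + A i i) / 2).trans (hB i i))
        (sum_prod_div_one_add_div_two_le_one hnn hrow)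
    _ = 2 ^ n * ∏ i, ∏ j, (1 - A i j) ^ (1 - A i j) := by
        simp only [B, prod_mul_distrib, prod_const, card_univ, Fintype.card_fin]
end

section
/- Let x = (x_1,...,x_n) be a stochastic vector (nonnegative entries summing to 1) and let y = x_1. Then ∏_{k=1}^n (1-x_k)^{1-x_k} ≥ (1-y)^{1-y} / e^{1-y}. -/
/-!
Since `t - 1 ≤ t log t` for `t ≥ 0`, every factor satisfies `(1 - x)^(1 - x) ≥ e^(-x)`.
Keep the factor at `k = 0` and bound the others this way: their product is at least
`e^(-(x_2 + ⋯ + x_n)) = e^(-(1 - x_1))`.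
-/

open scoped BigOperators

namespace Real

lemma exp_sub_one_le_rpow_self {t : ℝ} (ht : 0 ≤ t) : exp (t - 1) ≤ t ^ t := by
  rcases ht.eq_or_lt with rfl | ht
  · simp
  rw [rpow_def_of_pos ht, exp_le_exp]
  have hlog : 1 - t⁻¹ ≤ log t := one_sub_inv_le_log_of_pos ht
  calc t - 1 = t * (1 - t⁻¹) := by field_simp
    _ ≤ t * log t := mul_le_mul_of_nonneg_left hlog ht.le
    _ = log t * t := mul_comm _ _

lemma exp_neg_le_one_sub_rpow_one_sub {a : ℝ} (ha : a ≤ 1) : exp (-a) ≤ (1 - a) ^ (1 - a) := by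
  simpa using exp_sub_one_le_rpow_self (sub_nonneg.mpr ha)

lemma exp_neg_sum_le_prod_one_sub_rpow {ι : Type*} (s : Finset ι) (x : ι → ℝ)
    (hx : ∀ k ∈ s, x k ≤ 1) :
    exp (-∑ k ∈ s, x k) ≤ ∏ k ∈ s, (1 - x k) ^ (1 - x k) := by
  rw [← Finset.sum_neg_distrib, exp_sum]
  exact Finset.prod_le_prod (fun k _ => (exp_pos _).le)
    fun k hk => exp_neg_le_one_sub_rpow_one_sub (hx k hk)

end Real

theorem stmt_4 {n : ℕ} (hn : 0 < n) (x : Fin n → ℝ)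
    (hx : ∀ k, 0 ≤ x k) (hsum : ∑ k, x k = 1) :
    ∏ k, (1 - x k) ^ (1 - x k) ≥
      (1 - x ⟨0, hn⟩) ^ (1 - x ⟨0, hn⟩) / Real.exp (1 - x ⟨0, hn⟩) := by
  set i : Fin n := ⟨0, hn⟩
  have hle : ∀ k, x k ≤ 1 := fun k =>
    hsum ▸ Finset.single_le_sum (fun j _ => hx j) (Finset.mem_univ k)
  have hrest : ∑ k ∈ Finset.univ.erase i, x k = 1 - x i := by
    rw [Finset.sum_erase_eq_sub (Finset.mem_univ i), hsum]
  calc (1 - x i) ^ (1 - x i) / Real.exp (1 - x i)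
      = (1 - x i) ^ (1 - x i) * Real.exp (-∑ k ∈ Finset.univ.erase i, x k) := by
        rw [hrest, Real.exp_neg, div_eq_mul_inv]
    _ ≤ (1 - x i) ^ (1 - x i) * ∏ k ∈ Finset.univ.erase i, (1 - x k) ^ (1 - x k) :=
        mul_le_mul_of_nonneg_left
          (Real.exp_neg_sum_le_prod_one_sub_rpow _ x fun k _ => hle k)
          (Real.rpow_nonneg (sub_nonneg.mpr (hle i)) _)
    _ = ∏ k, (1 - x k) ^ (1 - x k) :=
        Finset.mul_prod_erase _ (fun k => (1 - x k) ^ (1 - x k)) (Finset.mem_univ i)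
end

section
/- For every y ∈ [0,1], the function f(y) = y·e^{1-y} / (1-y)^{1-y} satisfies f(y) ≤ e^{1/e}. -/
/-!
The numerator `y e^{1-y}` is at most `1` because `y ≤ e^{y-1}`, and the denominator `t^t` with
`t = 1 - y` is at least `e^{-1/e}` because `t log t` attains its minimum `-1/e` at `t = 1/e`.
-/

namespace Real

theorem mul_exp_one_sub_le_one (y : ℝ) : y * exp (1 - y) ≤ 1 := by
  have hy : y ≤ exp (y - 1) := by linarith [add_one_le_exp (y - 1)]
  calc y * exp (1 - y) ≤ exp (y - 1) * exp (1 - y) := by gcongr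
    _ = 1 := by rw [← exp_add]; simp

theorem log_le_exp_neg_one_mul {x : ℝ} (hx : 0 < x) : log x ≤ exp (-1) * x := by
  have h := log_le_sub_one_of_pos (mul_pos (exp_pos (-1)) hx)
  rw [log_mul (exp_pos _).ne' hx.ne', log_exp] at h
  linarith

theorem neg_exp_neg_one_le_mul_log {t : ℝ} (ht : 0 ≤ t) : -exp (-1) ≤ t * log t := by
  rcases ht.eq_or_lt with rfl | ht
  · simp [(exp_pos _).le]
  · -- the tangent-line bound `log x ≤ x / e` at `x = 1 / t`
    have h := log_le_exp_neg_one_mul (inv_pos.mpr ht)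
    rw [log_inv] at h
    have h' := mul_le_mul_of_nonneg_left h ht.le
    rw [mul_left_comm, mul_inv_cancel₀ ht.ne', mul_one] at h'
    linarith

theorem exp_neg_exp_neg_one_le_rpow_self {t : ℝ} (ht : 0 ≤ t) : exp (-exp (-1)) ≤ t ^ t := by
  rcases ht.eq_or_lt with rfl | ht
  · simpa using (exp_pos (-1)).le
  · rw [rpow_def_of_pos ht, mul_comm]
    exact exp_le_exp.mpr (neg_exp_neg_one_le_mul_log ht.le)

end Real

theorem stmt_5 (y : ℝ) (hy : y ∈ Set.Icc (0:ℝ) 1) :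
    y * Real.exp (1 - y) / (1 - y) ^ (1 - y) ≤ Real.exp (1 / Real.exp 1) := by
  have hden := Real.exp_neg_exp_neg_one_le_rpow_self (sub_nonneg.mpr hy.2)
  rw [div_le_iff₀ ((Real.exp_pos _).trans_le hden)]
  calc y * Real.exp (1 - y) ≤ 1 := Real.mul_exp_one_sub_le_one y
    _ = Real.exp (1 / Real.exp 1) * Real.exp (-Real.exp (-1)) := by
      rw [← Real.exp_add, Real.exp_neg, one_div]; simp
    _ ≤ Real.exp (1 / Real.exp 1) * (1 - y) ^ (1 - y) := by gcongr
end

section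
/- Let g : ℝ≥0 → ℝ≥0 satisfy g(x) ≥ e^{x/e} for 0 ≤ x ≤ e and g(x) ≥ x for x > e. Then for any r_1,...,r_n ≥ 0, ∏_{k=1}^n g(r_k) ≥ ∑_{k=1}^n r_k. -/
/-!
Let `φ(x) = exp (x / e)` for `x ≤ e` and `φ(x) = x` beyond. Then `g ≥ φ` on `[0, ∞)`,
`x ≤ φ x`, and `φ (a + b) ≤ φ a * φ b` for `a, b ≥ 0`: below `e` this is the exponential law
(and `φ ≤ exp (· / e)` everywhere since `e y ≤ exp y`), with one argument above `e` it is
`a (1 + b / e) ≥ a + b`, and with both above `e` it is `(a - 1)(b - 1) ≥ 1`. Hence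
`∑ rₖ ≤ φ (∑ rₖ) ≤ ∏ φ (rₖ) ≤ ∏ g (rₖ)`.
-/

open Real

theorem Finset.apply_sum_le_prod_apply {ι : Type*} (s : Finset ι) {f : ℝ → ℝ} (h_zero : f 0 ≤ 1)
    (h_nonneg : ∀ x, 0 ≤ x → 0 ≤ f x)
    (h_add : ∀ a b, 0 ≤ a → 0 ≤ b → f (a + b) ≤ f a * f b) {r : ι → ℝ}
    (hr : ∀ i ∈ s, 0 ≤ r i) :
    f (∑ i ∈ s, r i) ≤ ∏ i ∈ s, f (r i) := by
  classical
  induction s using Finset.induction_on with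
  | empty => simpa using h_zero
  | @insert a s ha ih =>
    have hra : 0 ≤ r a := hr a (s.mem_insert_self a)
    have hrs : ∀ i ∈ s, 0 ≤ r i := fun i hi => hr i (Finset.mem_insert_of_mem hi)
    rw [Finset.sum_insert ha, Finset.prod_insert ha]
    calc f (r a + ∑ i ∈ s, r i) ≤ f (r a) * f (∑ i ∈ s, r i) :=
          h_add _ _ hra (Finset.sum_nonneg hrs)
      _ ≤ f (r a) * ∏ i ∈ s, f (r i) :=
          mul_le_mul_of_nonneg_left (ih hrs) (h_nonneg _ hra)

namespace Real

theorem self_le_exp_div_exp_one (x : ℝ) : x ≤ exp (x / exp 1) := by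
  have h := exp_one_mul_le_exp (x := x / exp 1)
  rwa [mul_div_cancel₀ _ (exp_pos 1).ne'] at h

theorem two_lt_exp_one : (2 : ℝ) < exp 1 := by
  linarith [exp_one_gt_d9]

noncomputable def expDivOrId (x : ℝ) : ℝ :=
  if x ≤ exp 1 then exp (x / exp 1) else x

theorem expDivOrId_of_le {x : ℝ} (hx : x ≤ exp 1) : expDivOrId x = exp (x / exp 1) :=
  if_pos hx

theorem expDivOrId_of_lt {x : ℝ} (hx : exp 1 < x) : expDivOrId x = x :=
  if_neg hx.not_ge

theorem expDivOrId_zero : expDivOrId 0 = 1 := by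
  simp [expDivOrId_of_le (exp_pos 1).le]

theorem le_expDivOrId (x : ℝ) : x ≤ expDivOrId x := by
  rcases le_or_gt x (exp 1) with hx | hx
  · rw [expDivOrId_of_le hx]; exact self_le_exp_div_exp_one x
  · rw [expDivOrId_of_lt hx]

theorem expDivOrId_le_exp_div (x : ℝ) : expDivOrId x ≤ exp (x / exp 1) := by
  rcases le_or_gt x (exp 1) with hx | hx
  · rw [expDivOrId_of_le hx]
  · rw [expDivOrId_of_lt hx]; exact self_le_exp_div_exp_one x

theorem expDivOrId_pos (x : ℝ) : 0 < expDivOrId x := by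
  rcases le_or_gt x (exp 1) with h | h
  · rw [expDivOrId_of_le h]; exact exp_pos _
  · rw [expDivOrId_of_lt h]; exact (exp_pos 1).trans h

theorem add_le_mul_expDivOrId {a b : ℝ} (ha : exp 1 < a) (hb : 0 ≤ b) :
    a + b ≤ a * expDivOrId b := by
  have he := exp_pos 1
  rcases le_or_gt b (exp 1) with hb' | hb'
  · have hlin : 1 + b / exp 1 ≤ exp (b / exp 1) := by linarith [add_one_le_exp (b / exp 1)]
    have hab : b ≤ a * (b / exp 1) := by
      rw [mul_div_assoc', le_div_iff₀ he]; nlinarith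
    rw [expDivOrId_of_le hb']
    nlinarith
  · rw [expDivOrId_of_lt hb']
    nlinarith [two_lt_exp_one]

theorem expDivOrId_add_le_mul_of_lt {a b : ℝ} (ha : exp 1 < a) (hb : 0 ≤ b) :
    expDivOrId (a + b) ≤ expDivOrId a * expDivOrId b := by
  rw [expDivOrId_of_lt (by linarith), expDivOrId_of_lt ha]
  exact add_le_mul_expDivOrId ha hb

theorem expDivOrId_add_le_mul {a b : ℝ} (ha : 0 ≤ a) (hb : 0 ≤ b) :
    expDivOrId (a + b) ≤ expDivOrId a * expDivOrId b := by
  rcases lt_or_ge (exp 1) a with ha' | ha'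
  · exact expDivOrId_add_le_mul_of_lt ha' hb
  rcases lt_or_ge (exp 1) b with hb' | hb'
  · rw [add_comm, mul_comm]; exact expDivOrId_add_le_mul_of_lt hb' ha
  rw [expDivOrId_of_le ha', expDivOrId_of_le hb', ← exp_add, ← add_div]
  exact expDivOrId_le_exp_div _

end Real

theorem stmt_7_general (g : ℝ → ℝ)
    (h1 : ∀ x, 0 ≤ x → x ≤ Real.exp 1 → g x ≥ Real.exp (x / Real.exp 1))
    (h2 : ∀ x, Real.exp 1 < x → g x ≥ x)
    {n : ℕ} (r : Fin n → ℝ) (hr : ∀ k, 0 ≤ r k) :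
    ∏ k, g (r k) ≥ ∑ k, r k := by
  have hg : ∀ x, 0 ≤ x → expDivOrId x ≤ g x := fun x hx => by
    rcases le_or_gt x (exp 1) with h | h
    · rw [expDivOrId_of_le h]; exact h1 x hx h
    · rw [expDivOrId_of_lt h]; exact h2 x h
  calc ∑ k, r k ≤ expDivOrId (∑ k, r k) := le_expDivOrId _
    _ ≤ ∏ k, expDivOrId (r k) :=
        Finset.univ.apply_sum_le_prod_apply expDivOrId_zero.le
          (fun _ _ => (expDivOrId_pos _).le) (fun _ _ => expDivOrId_add_le_mul)
          (fun k _ => hr k)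
    _ ≤ ∏ k, g (r k) :=
        Finset.prod_le_prod (fun k _ => (expDivOrId_pos _).le) (fun k _ => hg _ (hr k))

theorem stmt_7 (g : ℝ → ℝ) (hg0 : ∀ x, 0 ≤ x → 0 ≤ g x)
    (h1 : ∀ x, 0 ≤ x → x ≤ Real.exp 1 → g x ≥ Real.exp (x / Real.exp 1))
    (h2 : ∀ x, Real.exp 1 < x → g x ≥ x)
    {n : ℕ} (r : Fin n → ℝ) (hr : ∀ k, 0 ≤ r k) :
    ∏ k, g (r k) ≥ ∑ k, r k :=
  stmt_7_general g h1 h2 r hr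
end

section
/- Let a ∈ (1, e^{1/2}) and write b = ln a. The function ψ(x) = 1 - (1-x)·a^x is increasing and strictly convex on [0,1], maps [0,1] onto [0,1], and the function x · ψ'(x)/ψ(x) is strictly increasing on (0,1). -/
/-!
Write `b = log a` and `u = a ^ x = exp (b x)`. Then `ψ' = (1 - (1 - x) b) u` and
`ψ'' = b (2 - (1 - x) b) u`, which give monotonicity and strict convexity on `[0, 1]`.
The numerator of the derivative of `x ψ' / ψ` factors as `u (A - u B)` with the polynomials
`A = (ψ' + x ψ'') / u` and `B = (1 - x) A + x (ψ' / u)²` in `x` and `b`. Since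
`(1 - b x) e^{b x} < 1`, it suffices that `B ≤ A (1 - b x)`, and indeed
`A (1 - b x) - B = b x² (1 - 2b) + b³ x² (1 - x)`, which is positive because `b < 1/2`.
-/

open Real Set

namespace ExpConvexMap

noncomputable def psi (a x : ℝ) : ℝ := 1 - (1 - x) * a ^ x

noncomputable def psiDeriv (a x : ℝ) : ℝ := (1 - (1 - x) * log a) * a ^ x

noncomputable def psiDeriv2 (a x : ℝ) : ℝ := log a * (2 - (1 - x) * log a) * a ^ x

variable {a : ℝ}

@[simp] lemma psi_zero : psi a 0 = 0 := by simp [psi]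

@[simp] lemma psi_one : psi a 1 = 1 := by simp [psi]

lemma hasDerivAt_psi (ha : 0 < a) (x : ℝ) : HasDerivAt (psi a) (psiDeriv a x) x :=
  ((((hasDerivAt_id' x).const_sub 1).mul (hasStrictDerivAt_const_rpow ha x).hasDerivAt).const_sub
    1).congr_deriv (by rw [psiDeriv]; ring)

lemma hasDerivAt_psiDeriv (ha : 0 < a) (x : ℝ) :
    HasDerivAt (psiDeriv a) (psiDeriv2 a x) x :=
  (((((hasDerivAt_id' x).const_sub 1).mul_const (log a)).const_sub 1).mul
    (hasStrictDerivAt_const_rpow ha x).hasDerivAt).congr_deriv (by rw [psiDeriv2]; ring)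

lemma continuous_psi (ha : 0 < a) : Continuous (psi a) :=
  continuous_iff_continuousAt.2 fun x => (hasDerivAt_psi ha x).continuousAt

lemma deriv_psi (ha : 0 < a) : deriv (psi a) = psiDeriv a :=
  funext fun x => (hasDerivAt_psi ha x).deriv

lemma psiDeriv_pos (ha : 0 < a) (hb : log a < 1) {x : ℝ} (hx : x ∈ Icc 0 1) :
    0 < psiDeriv a x := by
  have h : (1 - x) * log a < 1 := by
    rcases le_or_gt 0 (log a) with hb0 | hb0 <;> nlinarith [hx.1, hx.2]
  exact mul_pos (by linarith) (rpow_pos_of_pos ha x)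

lemma psiDeriv2_pos (ha : 1 < a) (hb : log a < 2) {x : ℝ} (hx : x ∈ Icc 0 1) :
    0 < psiDeriv2 a x := by
  have hb0 := log_pos ha
  have h : 0 < 2 - (1 - x) * log a := by nlinarith [hx.1, hx.2]
  have := rpow_pos_of_pos (zero_lt_one.trans ha) x
  unfold psiDeriv2
  positivity

lemma strictMonoOn_psi (ha : 0 < a) (hb : log a < 1) : StrictMonoOn (psi a) (Icc 0 1) := by
  refine strictMonoOn_of_deriv_pos (convex_Icc 0 1) (continuous_psi ha).continuousOn ?_
  intro x hx
  rw [interior_Icc] at hx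
  rw [deriv_psi ha]
  exact psiDeriv_pos ha hb (Ioo_subset_Icc_self hx)

lemma strictConvexOn_psi (ha : 1 < a) (hb : log a < 2) : StrictConvexOn ℝ (Icc 0 1) (psi a) := by
  have ha0 : 0 < a := zero_lt_one.trans ha
  refine strictConvexOn_of_deriv2_pos (convex_Icc 0 1) (continuous_psi ha0).continuousOn ?_
  intro x hx
  rw [interior_Icc] at hx
  have hd2 : deriv^[2] (psi a) x = psiDeriv2 a x := by
    simp only [Function.iterate_succ, Function.iterate_zero, Function.comp_apply, id_eq,
      deriv_psi ha0]
    exact (hasDerivAt_psiDeriv ha0 x).deriv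
  rw [hd2]
  exact psiDeriv2_pos ha hb (Ioo_subset_Icc_self hx)

lemma image_psi_Icc (ha : 0 < a) (hb : log a < 1) : psi a '' Icc 0 1 = Icc 0 1 := by
  refine Subset.antisymm ?_ ?_
  · rintro _ ⟨x, hx, rfl⟩
    have hmono := (strictMonoOn_psi ha hb).monotoneOn
    exact ⟨psi_zero (a := a) ▸ hmono (left_mem_Icc.2 zero_le_one) hx hx.1,
      psi_one (a := a) ▸ hmono hx (right_mem_Icc.2 zero_le_one) hx.2⟩
  · simpa using intermediate_value_Icc zero_le_one (continuous_psi ha).continuousOn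

lemma psi_pos (ha : 0 < a) (hb : log a < 1) {x : ℝ} (hx : x ∈ Ioo 0 1) : 0 < psi a x := by
  simpa using strictMonoOn_psi ha hb (left_mem_Icc.2 zero_le_one) (Ioo_subset_Icc_self hx) hx.1

lemma one_sub_mul_exp_lt_one {t : ℝ} (ht : t ≠ 0) : (1 - t) * exp t < 1 := by
  have h : 1 - t < exp (-t) := by linarith [add_one_lt_exp (neg_ne_zero.2 ht)]
  calc (1 - t) * exp t < exp (-t) * exp t := mul_lt_mul_of_pos_right h (exp_pos t)
    _ = 1 := by rw [← exp_add, neg_add_cancel, exp_zero]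

lemma ratio_polynomial_lt {b x : ℝ} (hb0 : 0 < b) (hb : b < 1 / 2) (hx0 : 0 < x) (hx1 : x < 1) :
    (1 - x) * (1 - (1 - x) * b + x * b * (2 - (1 - x) * b)) + x * (1 - (1 - x) * b) ^ 2
      < (1 - (1 - x) * b + x * b * (2 - (1 - x) * b)) * (1 - b * x) := by
  have h₁ : 0 < b * x ^ 2 * (1 - 2 * b) := by have := mul_pos hb0 (pow_pos hx0 2); nlinarith
  have h₂ : 0 < b ^ 3 * x ^ 2 * (1 - x) := by
    have := mul_pos (pow_pos hb0 3) (pow_pos hx0 2); nlinarith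
  nlinarith

lemma mul_psiDeriv_div_psi_numerator_eq (x : ℝ) :
    (1 * psiDeriv a x + x * psiDeriv2 a x) * psi a x - x * psiDeriv a x * psiDeriv a x
      = a ^ x * ((1 - (1 - x) * log a + x * log a * (2 - (1 - x) * log a))
        - a ^ x * ((1 - x) * (1 - (1 - x) * log a + x * log a * (2 - (1 - x) * log a))
          + x * (1 - (1 - x) * log a) ^ 2)) := by
  simp only [psi, psiDeriv, psiDeriv2]
  ring

lemma mul_psiDeriv_div_psi_numerator_pos (ha : 1 < a) (hb : log a < 1 / 2) {x : ℝ}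
    (hx : x ∈ Ioo 0 1) :
    0 < (1 * psiDeriv a x + x * psiDeriv2 a x) * psi a x - x * psiDeriv a x * psiDeriv a x := by
  obtain ⟨hx0, hx1⟩ := hx
  have ha0 : 0 < a := zero_lt_one.trans ha
  set b := log a
  have hb0 : 0 < b := log_pos ha
  have hu : a ^ x = exp (b * x) := by rw [rpow_def_of_pos ha0, mul_comm]
  set A := 1 - (1 - x) * b + x * b * (2 - (1 - x) * b)
  set B := (1 - x) * A + x * (1 - (1 - x) * b) ^ 2
  have hA : 0 < A := by
    have h₁ : 0 < 1 - (1 - x) * b := by nlinarith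
    have h₂ : 0 < x * b * (2 - (1 - x) * b) := mul_pos (mul_pos hx0 hb0) (by nlinarith)
    linarith
  have huB : a ^ x * B < A :=
    calc a ^ x * B < a ^ x * (A * (1 - b * x)) :=
          mul_lt_mul_of_pos_left (ratio_polynomial_lt hb0 hb hx0 hx1) (rpow_pos_of_pos ha0 x)
      _ = A * ((1 - b * x) * exp (b * x)) := by rw [hu]; ring
      _ < A * 1 := mul_lt_mul_of_pos_left
          (one_sub_mul_exp_lt_one (mul_pos hb0 hx0).ne') hA
      _ = A := mul_one A
  rw [mul_psiDeriv_div_psi_numerator_eq]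
  exact mul_pos (rpow_pos_of_pos ha0 x) (by linarith)

lemma strictMonoOn_mul_psiDeriv_div_psi (ha : 1 < a) (hb : log a < 1 / 2) :
    StrictMonoOn (fun x => x * psiDeriv a x / psi a x) (Ioo 0 1) := by
  have ha0 : 0 < a := zero_lt_one.trans ha
  have hpos := fun x (hx : x ∈ Ioo (0 : ℝ) 1) => psi_pos ha0 (by linarith) hx
  have hderiv : ∀ x ∈ Ioo (0 : ℝ) 1, HasDerivAt (fun x => x * psiDeriv a x / psi a x)
      (((1 * psiDeriv a x + x * psiDeriv2 a x) * psi a x - x * psiDeriv a x * psiDeriv a x)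
        / psi a x ^ 2) x := fun x hx =>
    ((hasDerivAt_id' x).mul (hasDerivAt_psiDeriv ha0 x)).div (hasDerivAt_psi ha0 x) (hpos x hx).ne'
  refine strictMonoOn_of_deriv_pos (convex_Ioo 0 1)
    (fun x hx => (hderiv x hx).continuousAt.continuousWithinAt) ?_
  intro x hx
  rw [interior_Ioo] at hx
  rw [(hderiv x hx).deriv]
  exact div_pos (mul_psiDeriv_div_psi_numerator_pos ha hb hx) (pow_pos (hpos x hx) 2)

end ExpConvexMap

open ExpConvexMap in
theorem stmt_9 (a : ℝ) (ha1 : 1 < a) (ha2 : a < Real.exp (1/2))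
    (ψ ψ' : ℝ → ℝ)
    (hψ : ∀ x, ψ x = 1 - (1 - x) * a ^ x)
    (hψ' : ∀ x, ψ' x = (1 - (1 - x) * Real.log a) * a ^ x) :
    StrictMonoOn ψ (Set.Icc 0 1) ∧
    StrictConvexOn ℝ (Set.Icc 0 1) ψ ∧
    ψ '' Set.Icc 0 1 = Set.Icc 0 1 ∧
    StrictMonoOn (fun x => x * ψ' x / ψ x) (Set.Ioo 0 1) := by
  obtain rfl : ψ = psi a := funext hψ
  obtain rfl : ψ' = psiDeriv a := funext hψ'
  have ha0 : 0 < a := zero_lt_one.trans ha1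
  have hb : Real.log a < 1 / 2 := by simpa using Real.log_lt_log ha0 ha2
  exact ⟨strictMonoOn_psi ha0 (by linarith), strictConvexOn_psi ha1 (by linarith),
    image_psi_Icc ha0 (by linarith), strictMonoOn_mul_psiDeriv_div_psi ha1 hb⟩
end

section
/- Let a ∈ (1, e^{1/2}) and ψ(x) = 1 - (1-x)·a^x. The function x · ψ''(x)/ψ'(x) is strictly increasing on (0,1). -/
/-!
With `L = log a ∈ (0, 1/2)` and `u = 1 - (1 - x) L = (1 - L) + L x > 0`, the factor `a ^ x` cancels
and `2 - (1 - x) L = 1 + u`, so `x ψ''(x) / ψ'(x) = L (x + x / u)`. The Möbius map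
`x ↦ x / ((1 - L) + L x)` is increasing for `x ≥ 0` because `1 - L > 0`.
-/

open Real Set

lemma strictMonoOn_div_add_mul {c L : ℝ} (hc : 0 < c) (hL : 0 ≤ L) :
    StrictMonoOn (fun x => x / (c + L * x)) (Ici 0) := by
  intro x hx y hy hxy
  rw [mem_Ici] at hx hy
  rw [div_lt_div_iff₀ (by positivity) (by positivity)]
  nlinarith

theorem stmt_10 (a : ℝ) (ha1 : 1 < a) (ha2 : a < Real.exp (1/2))
    (ψ' ψ'' : ℝ → ℝ)
    (hψ' : ∀ x, ψ' x = (1 - (1 - x) * Real.log a) * a ^ x)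
    (hψ'' : ∀ x, ψ'' x = Real.log a * (2 - (1 - x) * Real.log a) * a ^ x) :
    StrictMonoOn (fun x => x * ψ'' x / ψ' x) (Set.Ioo 0 1) := by
  set L := log a
  have hL0 : 0 < L := log_pos ha1
  have hL1 : L < 1 := by
    have := (log_lt_iff_lt_exp (by linarith)).2 ha2
    linarith
  have hform : EqOn (fun x => L * (x + x / ((1 - L) + L * x))) (fun x => x * ψ'' x / ψ' x)
      (Ioo 0 1) := by
    intro x ⟨hx0, _⟩
    have hu : 0 < 1 - L + L * x := by nlinarith
    have hax : 0 < a ^ x := rpow_pos_of_pos (by linarith) x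
    simp only [hψ', hψ'']
    rw [show 1 - (1 - x) * L = 1 - L + L * x by ring]
    field_simp
    ring
  refine StrictMonoOn.congr ?_ hform
  have hsum := strictMonoOn_id.add (strictMonoOn_div_add_mul (sub_pos.2 hL1) hL0.le)
  exact (strictMono_mul_left_of_pos hL0).comp_strictMonoOn
    (hsum.mono (Ioo_subset_Ioi_self.trans Ioi_subset_Ici_self))
end

section
/- Let a be the unique root in (1, e) of (1 - ln a)/a = 1/e, and ψ(x) = 1 - (1-x)·a^x. Then ψ(e^{-r/e}) + ψ(r·e^{-r/e}) ≥ 1 for all 0 ≤ r ≤ 1. -/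
open Real

/-!
Write `L = log a`, so that `a ^ x = exp (L x)` and the defining equation of `a` reads `a = e (1 - L)`.
Since `a ^ x ≤ a` we get `ψ x ≥ 1 + a (x - 1)`, and the cubic Taylor bound for `exp` gives
`ψ y ≥ (1 - L) y + L (2 - L) y² / 2` on `[0, 1]`. With `x = e^{-r/e}`, `y = r x` the sum is then
`≥ 1 + (1 - L) ((e + r) x - e) + L (2 - L) r² x² / 2`, and two elementary estimates,
`(e + r) x ≥ e - r² / (2e)` and `e x² ≥ 1`, reduce the claim to `1 - L ≤ L (2 - L)`.
That holds because `u = 1 - L` solves `u eᵘ = 1`, whence `u (1 + u) ≤ 1`.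
-/

lemma exp_le_cubic {z : ℝ} (h0 : 0 ≤ z) (h1 : z ≤ 1) :
    exp z ≤ 1 + z + z ^ 2 / 2 + 2 / 9 * z ^ 3 := by
  have h := exp_bound' h0 h1 (n := 3) (by norm_num)
  norm_num [Finset.sum_range_succ, Nat.factorial] at h
  linarith

lemma one_sub_sq_div_two_le_one_add_mul_exp_neg {t : ℝ} (h0 : 0 ≤ t) (h1 : t ≤ 1) :
    1 - t ^ 2 / 2 ≤ (1 + t) * exp (-t) := by
  have hexp := exp_le_cubic h0 h1
  have h : (1 - t ^ 2 / 2) * exp t ≤ 1 + t := by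
    nlinarith [mul_le_mul_of_nonneg_left hexp (by nlinarith : (0 : ℝ) ≤ 1 - t ^ 2 / 2),
      pow_nonneg h0 3, pow_nonneg h0 4, pow_nonneg h0 5]
  rwa [exp_neg, ← div_eq_mul_inv, le_div_iff₀ (exp_pos t)]

lemma one_sub_mul_exp_mul_le {L y : ℝ} (hL0 : 0 ≤ L) (hL1 : L ≤ 1) (hy0 : 0 ≤ y) (hy1 : y ≤ 1) :
    (1 - y) * exp (L * y) ≤ 1 - (1 - L) * y - L * (2 - L) / 2 * y ^ 2 := by
  have hexp := exp_le_cubic (mul_nonneg hL0 hy0) (mul_le_one₀ hL1 hy0 hy1)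
  nlinarith [mul_le_mul_of_nonneg_left hexp (by linarith : (0 : ℝ) ≤ 1 - y),
    pow_nonneg hy0 3, pow_nonneg hy0 4, mul_nonneg (mul_nonneg hL0 hL0) (pow_nonneg hy0 3),
    mul_nonneg (mul_nonneg (mul_nonneg hL0 hL0) (pow_nonneg hy0 3)) (by linarith : (0:ℝ) ≤ 1 - L)]

lemma add_sq_le_one_of_mul_exp_eq_one {u : ℝ} (hu : u * exp u = 1) : u + u ^ 2 ≤ 1 := by
  have hpos : 0 < u := pos_of_mul_pos_left (hu ▸ one_pos) (exp_pos u).le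
  nlinarith [mul_le_mul_of_nonneg_left (add_one_le_exp u) hpos.le]

lemma sq_sub_sq_div_two_le_mul_exp_neg_div {c r : ℝ} (hc : 0 < c) (hr0 : 0 ≤ r) (hrc : r ≤ c) :
    c ^ 2 - r ^ 2 / 2 ≤ c * (c + r) * exp (-r / c) := by
  have h := one_sub_sq_div_two_le_one_add_mul_exp_neg (div_nonneg hr0 hc.le)
    ((div_le_one hc).mpr hrc)
  have := mul_le_mul_of_nonneg_left h (sq_nonneg c)
  field_simp at this
  rw [neg_div]
  linarith

lemma one_le_exp_one_mul_exp_neg_div_sq {r : ℝ} (hr : r ≤ 1) :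
    1 ≤ exp 1 * exp (-r / exp 1) ^ 2 := by
  rw [← exp_nat_mul, ← exp_add]
  apply one_le_exp
  have : r / exp 1 ≤ 1 / 2 := by
    rw [div_le_iff₀ (exp_pos 1)]
    linarith [add_one_le_exp 1]
  push_cast
  linarith [neg_div (exp 1) r]

lemma one_sub_log_mul_exp_one_sub_log {a : ℝ} (ha0 : 0 < a)
    (ha : (1 - log a) / a = 1 / exp 1) : (1 - log a) * exp (1 - log a) = 1 := by
  have hlog : 1 - log a = a / exp 1 := by
    field_simp at ha ⊢
    linarith
  rw [exp_sub, exp_log ha0, hlog]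
  field_simp

theorem stmt_11 (a : ℝ) (ha1 : 1 < a) (ha2 : a < Real.exp 1)
    (ha : (1 - Real.log a) / a = 1 / Real.exp 1)
    (ψ : ℝ → ℝ) (hψ : ∀ x, ψ x = 1 - (1 - x) * a ^ x) :
    ∀ r ∈ Set.Icc (0:ℝ) 1,
      ψ (Real.exp (-r / Real.exp 1)) + ψ (r * Real.exp (-r / Real.exp 1)) ≥ 1 := by
  rintro r ⟨hr0, hr1⟩
  have ha0 : 0 < a := by linarith
  set L := log a
  set x := exp (-r / exp 1)
  have hL0 : 0 ≤ L := log_nonneg ha1.le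
  have hL1 : L < 1 := by simpa using log_lt_log ha0 ha2
  have ha_eq : a = exp 1 * (1 - L) := by
    field_simp at ha
    linarith
  have hu := add_sq_le_one_of_mul_exp_eq_one (one_sub_log_mul_exp_one_sub_log ha0 ha)
  have hx0 : 0 < x := exp_pos _
  have hx1 : x ≤ 1 := exp_le_one_iff.mpr (div_nonpos_of_nonpos_of_nonneg (by linarith) (exp_pos 1).le)
  have hψx : 1 + a * (x - 1) ≤ ψ x := by
    have : a ^ x ≤ a := by simpa using rpow_le_rpow_of_exponent_le ha1.le hx1
    rw [hψ]
    nlinarith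
  have hψy : (1 - L) * (r * x) + L * (2 - L) / 2 * (r * x) ^ 2 ≤ ψ (r * x) := by
    rw [hψ, rpow_def_of_pos ha0]
    linarith [one_sub_mul_exp_mul_le hL0 hL1.le (mul_nonneg hr0 hx0.le) (mul_le_one₀ hr1 hx0.le hx1)]
  have hA := sq_sub_sq_div_two_le_mul_exp_neg_div (exp_pos 1) hr0 (by linarith [add_one_le_exp 1])
  have hB := one_le_exp_one_mul_exp_neg_div_sq hr1
  nlinarith [mul_pos (exp_pos 1) hx0, mul_le_mul_of_nonneg_left hA (by linarith : 0 ≤ 1 - L),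
    mul_le_mul_of_nonneg_left hB (mul_nonneg (sq_nonneg r) (by nlinarith : 0 ≤ L * (2 - L)))]
end

section
/- Let ψ : [0,1] → [0,1] be an increasing, differentiable, convex function with ψ(0)=0, ψ(1)=1. If ψ(e^{-r/e}) + ψ(r·e^{-r/e}) ≥ 1 for all r ∈ [0,1], then the same inequality holds for all r ∈ [0,e]. -/
/-!
For `1 ≤ r ≤ e` put `s = r - e log r`, which lies in `[0, 1]`. Then `e^{-s/e} = r e^{-r/e}`, so
the first term of the sum at `s` is the second term at `r`; and `s e^{-s/e} = r s e^{-r/e}` is at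
most `e^{-r/e}` because `r s ≤ 1`, so by monotonicity the second term at `s` is at most the first
term at `r`. Hence the sum at `r` dominates the sum at `s`, which is at least `1` by hypothesis.
-/

open Set

namespace Real

lemma sub_one_le_exp_one_sub_one_mul_log {r : ℝ} (h1 : 1 ≤ r) (he : r ≤ exp 1) :
    r - 1 ≤ (exp 1 - 1) * log r := by
  have hd : 0 < exp 1 - 1 := by linarith [add_one_lt_exp one_ne_zero]
  set a := (exp 1 - r) / (exp 1 - 1)
  set b := (r - 1) / (exp 1 - 1)
  have hconc := strictConcaveOn_log_Ioi.concaveOn.2 (mem_Ioi.2 one_pos) (mem_Ioi.2 (exp_pos 1))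
    (div_nonneg (sub_nonneg.2 he) hd.le) (div_nonneg (sub_nonneg.2 h1) hd.le)
    (show a + b = 1 by simp only [a, b]; field_simp; ring)
  have hcomb : a • (1 : ℝ) + b • exp 1 = r := by
    simp only [a, b, smul_eq_mul]; field_simp; ring
  rw [hcomb, log_one, log_exp, smul_eq_mul, smul_eq_mul, mul_zero, zero_add, mul_one] at hconc
  have hb : (exp 1 - 1) * b = r - 1 := by simp only [b]; field_simp
  nlinarith

lemma mul_sub_exp_one_mul_log_le_one {r : ℝ} (h1 : 1 ≤ r) (he : r ≤ exp 1) :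
    r * (r - exp 1 * log r) ≤ 1 := by
  -- The claim is `(r - 1) (r + 1) ≤ e r log r`: for `r ≤ e - 1` the tangent bound
  -- `log r ≥ 1 - 1/r` suffices, for `r ≥ e - 1` the chord of `log` over `[1, e]` does.
  rcases le_total r (exp 1 - 1) with hr | hr
  · have hlog : 1 - r⁻¹ ≤ log r := one_sub_inv_le_log_of_pos (by linarith)
    have hinv : r * (1 - r⁻¹) = r - 1 := by field_simp
    nlinarith [mul_le_mul_of_nonneg_left hlog (by positivity : 0 ≤ exp 1 * r),
      mul_nonneg (sub_nonneg.2 h1) (sub_nonneg.2 hr)]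
  · have hd : 0 < exp 1 - 1 := by linarith [add_one_lt_exp one_ne_zero]
    refine le_of_mul_le_mul_left ?_ hd
    nlinarith [mul_le_mul_of_nonneg_left (sub_one_le_exp_one_sub_one_mul_log h1 he)
        (by positivity : 0 ≤ exp 1 * r),
      mul_nonneg (sub_nonneg.2 h1) (sub_nonneg.2 hr)]

lemma sub_exp_one_mul_log_mem_Icc {r : ℝ} (h1 : 1 ≤ r) (he : r ≤ exp 1) :
    r - exp 1 * log r ∈ Icc 0 1 := by
  have hpos : 0 < r := by linarith
  have hlog : log r ≤ r / exp 1 := by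
    have := log_le_sub_one_of_pos (div_pos hpos (exp_pos 1))
    rw [log_div hpos.ne' (exp_pos 1).ne', log_exp] at this
    linarith
  have hnonneg : 0 ≤ r - exp 1 * log r := by
    rw [le_div_iff₀' (exp_pos 1)] at hlog
    linarith
  refine ⟨hnonneg, ?_⟩
  nlinarith [mul_sub_exp_one_mul_log_le_one h1 he]

lemma exp_neg_sub_exp_one_mul_log_div {r : ℝ} (hr : 0 < r) :
    exp (-(r - exp 1 * log r) / exp 1) = r * exp (-r / exp 1) := by
  have hsplit : -(r - exp 1 * log r) / exp 1 = log r + -r / exp 1 := by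
    field_simp; ring
  rw [hsplit, exp_add, exp_log hr]

end Real

open Real

lemma MonotoneOn.sum_comp_sub_exp_one_mul_log_le {ψ : ℝ → ℝ} (hψ : MonotoneOn ψ (Icc 0 1))
    {r : ℝ} (h1 : 1 ≤ r) (he : r ≤ exp 1) :
    let s := r - exp 1 * log r
    ψ (exp (-s / exp 1)) + ψ (s * exp (-s / exp 1)) ≤
      ψ (exp (-r / exp 1)) + ψ (r * exp (-r / exp 1)) := by
  intro s
  have hs : s ∈ Icc 0 1 := sub_exp_one_mul_log_mem_Icc h1 he
  have hexp : exp (-s / exp 1) = r * exp (-r / exp 1) :=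
    exp_neg_sub_exp_one_mul_log_div (by linarith)
  have hx : exp (-r / exp 1) ∈ Icc 0 1 :=
    ⟨(exp_pos _).le, exp_le_one_iff.2 (div_nonpos_of_nonpos_of_nonneg (by linarith) (exp_pos 1).le)⟩
  have hle : s * exp (-s / exp 1) ≤ exp (-r / exp 1) := by
    rw [hexp, ← mul_assoc, mul_comm s r]
    exact mul_le_of_le_one_left (exp_pos _).le (mul_sub_exp_one_mul_log_le_one h1 he)
  have hψle : ψ (s * exp (-s / exp 1)) ≤ ψ (exp (-r / exp 1)) :=
    hψ ⟨mul_nonneg hs.1 (exp_pos _).le, hle.trans hx.2⟩ hx hle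
  rw [hexp] at hψle ⊢
  linarith

theorem stmt_12_general (ψ : ℝ → ℝ)
    (hmono : MonotoneOn ψ (Set.Icc 0 1))
    (hbase : ∀ r ∈ Set.Icc (0:ℝ) 1,
      ψ (Real.exp (-r / Real.exp 1)) + ψ (r * Real.exp (-r / Real.exp 1)) ≥ 1) :
    ∀ r ∈ Set.Icc (0:ℝ) (Real.exp 1),
      ψ (Real.exp (-r / Real.exp 1)) + ψ (r * Real.exp (-r / Real.exp 1)) ≥ 1 := by
  rintro r ⟨hr0, hre⟩
  rcases le_total r 1 with hr1 | hr1
  · exact hbase r ⟨hr0, hr1⟩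
  · exact (hbase _ (sub_exp_one_mul_log_mem_Icc hr1 hre)).trans
      (hmono.sum_comp_sub_exp_one_mul_log_le hr1 hre)

theorem stmt_12 (ψ : ℝ → ℝ)
    (hmono : MonotoneOn ψ (Set.Icc 0 1))
    (hdiff : DifferentiableOn ℝ ψ (Set.Icc 0 1))
    (hconv : ConvexOn ℝ (Set.Icc 0 1) ψ)
    (h0 : ψ 0 = 0) (h1 : ψ 1 = 1)
    (hmaps : Set.MapsTo ψ (Set.Icc 0 1) (Set.Icc 0 1))
    (hbase : ∀ r ∈ Set.Icc (0:ℝ) 1,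
      ψ (Real.exp (-r / Real.exp 1)) + ψ (r * Real.exp (-r / Real.exp 1)) ≥ 1) :
    ∀ r ∈ Set.Icc (0:ℝ) (Real.exp 1),
      ψ (Real.exp (-r / Real.exp 1)) + ψ (r * Real.exp (-r / Real.exp 1)) ≥ 1 :=
  stmt_12_general ψ hmono hbase
end

section
/- For r > 1 the function g(y) = (1/y)·ln((1-ry)/(1-y)) is decreasing on the interval (0, 1/r). -/
/-!
Write `L y = log ((1 - r y) / (1 - y))`. Since `L 0 = 0`, the function in question is the slope
of `L` between `0` and `y`, and slopes of a concave function from a fixed point decrease. `L` is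
concave on `(-∞, 1/r)` because `(1 - r y) / (1 - y) = r - (r - 1) / (1 - y)` is concave and
positive there, and `log` is concave and increasing.
-/

open Real Set

lemma ConcaveOn.log {s : Set ℝ} {f : ℝ → ℝ} (hf : ConcaveOn ℝ s f)
    (hpos : ∀ x ∈ s, 0 < f x) : ConcaveOn ℝ s fun x => Real.log (f x) := by
  refine ⟨hf.1, fun x hx y hy a b ha hb hab => ?_⟩
  calc a • Real.log (f x) + b • Real.log (f y)
      ≤ Real.log (a • f x + b • f y) :=
        strictConcaveOn_log_Ioi.concaveOn.2 (hpos x hx) (hpos y hy) ha hb hab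
    _ ≤ Real.log (f (a • x + b • y)) :=
        log_le_log ((convex_Ioi (0 : ℝ)) (hpos x hx) (hpos y hy) ha hb hab)
          (hf.2 hx hy ha hb hab)

lemma concaveOn_one_sub_mul_div_one_sub {r : ℝ} (hr : 1 ≤ r) :
    ConcaveOn ℝ (Iio 1) fun y => (1 - r * y) / (1 - y) := by
  refine ⟨convex_Iio 1, fun x (hx : x < 1) y (hy : y < 1) a b ha hb hab => ?_⟩
  have hm : a * x + b * y < 1 := convex_Iio (1 : ℝ) hx hy ha hb hab
  obtain rfl : b = 1 - a := by linarith
  have hx' : 0 < 1 - x := by linarith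
  have hy' : 0 < 1 - y := by linarith
  have hm' : 0 < 1 - (a * x + (1 - a) * y) := by linarith
  have hr' : 0 ≤ r - 1 := by linarith
  have gap : (1 - r * (a * x + (1 - a) * y)) / (1 - (a * x + (1 - a) * y))
      - (a * ((1 - r * x) / (1 - x)) + (1 - a) * ((1 - r * y) / (1 - y)))
      = (r - 1) * (a * (1 - a) * (x - y) ^ 2)
        / ((1 - x) * (1 - y) * (1 - (a * x + (1 - a) * y))) := by
    field_simp
    ring
  simp only [smul_eq_mul]
  rw [← sub_nonneg, gap]
  positivity

lemma concaveOn_log_one_sub_mul_div_one_sub {r : ℝ} (hr : 1 ≤ r) :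
    ConcaveOn ℝ (Iio r⁻¹) fun y => log ((1 - r * y) / (1 - y)) := by
  have hr0 : 0 < r := by linarith
  have hsub : Iio r⁻¹ ⊆ Iio 1 := Iio_subset_Iio (inv_le_one_of_one_le₀ hr)
  refine ((concaveOn_one_sub_mul_div_one_sub hr).subset hsub (convex_Iio _)).log ?_
  intro y (hy : y < r⁻¹)
  have hry : r * y < 1 := by simpa [hr0.ne'] using mul_lt_mul_of_pos_left hy hr0
  have hy1 : y < 1 := hsub hy
  exact div_pos (by linarith) (by linarith)

theorem stmt_13 (r : ℝ) (hr : 1 < r) :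
    AntitoneOn (fun y => (1 / y) * Real.log ((1 - r * y) / (1 - y)))
      (Set.Ioo 0 (1 / r)) := by
  have hslope := (concaveOn_log_one_sub_mul_div_one_sub hr.le).antitoneOn_slope_gt
    (x := 0) (inv_pos.2 (zero_lt_one.trans hr))
  refine (hslope.mono ?_).congr ?_
  · rintro y ⟨hy0, hy⟩
    exact ⟨by rwa [one_div] at hy, hy0⟩
  · intro y _
    simp [slope_def_field, div_eq_inv_mul]
end

section
/- For 0 ≤ x ≤ 1 and for (e-x) in the complementary position: (e-x+1)·e^{-(e-x)/e} ≥ (x+1)·e^{-x/e}. That is, with f(t) = (t+1)e^{-t/e}, we have f(e-x) ≥ f(x) for all x ∈ [0,1]. -/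
/-!
Multiplying both sides by `e · exp (x / e)`, the inequality becomes
`e (x + 1) ≤ (e + 1 - x) exp (2x / e)`. Bounding `exp` below by its quadratic Taylor polynomial
leaves a cubic in `x` that splits as a sum of terms nonnegative on `[0, 1]`, the only numerical
input being `e² < 2e + 2`, i.e. `e < 1 + √3`.
-/

open Real

theorem exp_one_sq_lt : exp 1 ^ 2 < 2 * exp 1 + 2 := by
  nlinarith [exp_one_lt_d9, exp_one_gt_d9]

theorem exp_one_mul_le_quadratic {x : ℝ} (hx : x ∈ Set.Icc (0 : ℝ) 1) :
    exp 1 * (x + 1) ≤ (exp 1 - x + 1) * (1 + 2 * x / exp 1 + (2 * x / exp 1) ^ 2 / 2) := by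
  obtain ⟨hx0, hx1⟩ := hx
  have hcubic : 0 ≤ exp 1 ^ 2 * (1 - x) + x * exp 1 * (2 * exp 1 + 2 - exp 1 ^ 2) +
      2 * x ^ 2 * (1 - x) := by
    have : 0 < 2 * exp 1 + 2 - exp 1 ^ 2 := by linarith [exp_one_sq_lt]
    have : 0 ≤ 1 - x := by linarith
    positivity
  have hdiff : (exp 1 - x + 1) * (1 + 2 * x / exp 1 + (2 * x / exp 1) ^ 2 / 2) - exp 1 * (x + 1) =
      (exp 1 ^ 2 * (1 - x) + x * exp 1 * (2 * exp 1 + 2 - exp 1 ^ 2) + 2 * x ^ 2 * (1 - x)) /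
        exp 1 ^ 2 := by
    field_simp
    ring
  rw [← sub_nonneg, hdiff]
  exact div_nonneg hcubic (sq_nonneg _)

theorem exp_one_mul_le_mul_exp {x : ℝ} (hx : x ∈ Set.Icc (0 : ℝ) 1) :
    exp 1 * (x + 1) ≤ (exp 1 - x + 1) * exp (2 * x / exp 1) := by
  have ht : 0 ≤ 2 * x / exp 1 := by have := hx.1; positivity
  have hc : 0 ≤ exp 1 - x + 1 := by linarith [hx.2, add_one_le_exp 1]
  exact (exp_one_mul_le_quadratic hx).trans
    (mul_le_mul_of_nonneg_left (quadratic_le_exp_of_nonneg ht) hc)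

theorem add_one_mul_exp_neg_div_le_iff (x : ℝ) :
    (x + 1) * exp (-x / exp 1) ≤ (exp 1 - x + 1) * exp (-(exp 1 - x) / exp 1) ↔
      exp 1 * (x + 1) ≤ (exp 1 - x + 1) * exp (2 * x / exp 1) := by
  have he : 0 < exp 1 := exp_pos 1
  have hsplit : exp (-(exp 1 - x) / exp 1) = exp (2 * x / exp 1) / exp 1 * exp (-x / exp 1) := by
    rw [div_mul_eq_mul_div, ← exp_add, eq_div_iff he.ne', ← exp_add]
    congr 1
    field_simp
    ring
  rw [hsplit, ← mul_assoc, mul_le_mul_iff_left₀ (exp_pos _), ← mul_div_assoc, le_div_iff₀ he,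
    mul_comm]

theorem stmt_14 (x : ℝ) (hx : x ∈ Set.Icc (0:ℝ) 1) :
    (Real.exp 1 - x + 1) * Real.exp (-(Real.exp 1 - x) / Real.exp 1) ≥
      (x + 1) * Real.exp (-x / Real.exp 1) :=
  (add_one_mul_exp_neg_div_le_iff x).2 (exp_one_mul_le_mul_exp hx)
end

section
/- For all x ∈ [0,1], (e-x)·e^{-(e-x)/e} ≥ e^{-x/e}. -/
/-!
Multiplying out, the inequality says `exp (1 - 2x/e) ≤ e - x`. With `t = x/e` this is
`exp (-2t) ≤ 1 - t`, which follows from `exp (2t) ≥ 1 + 2t` because `(1 - t)(1 + 2t) ≥ 1`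
for `0 ≤ t ≤ 1/2`.
-/

open Real

lemma exp_neg_two_mul_le_one_sub {t : ℝ} (ht₀ : 0 ≤ t) (ht₁ : t ≤ 1 / 2) :
    exp (-(2 * t)) ≤ 1 - t := by
  have hpos : 0 < 1 + 2 * t := by linarith
  calc exp (-(2 * t)) = (exp (2 * t))⁻¹ := exp_neg _
    _ ≤ (1 + 2 * t)⁻¹ := inv_anti₀ hpos (by linarith [add_one_le_exp (2 * t)])
    _ ≤ 1 - t := by
      rw [inv_le_iff_one_le_mul₀ hpos]
      nlinarith

lemma exp_one_sub_two_mul_div_le {x : ℝ} (hx₀ : 0 ≤ x) (hx₁ : 2 * x ≤ exp 1) :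
    exp (1 - 2 * x / exp 1) ≤ exp 1 - x := by
  have he : 0 < exp 1 := exp_pos 1
  have key := exp_neg_two_mul_le_one_sub (div_nonneg hx₀ he.le)
    (by rw [div_le_iff₀ he]; linarith)
  calc exp (1 - 2 * x / exp 1) = exp 1 * exp (-(2 * (x / exp 1))) := by
        rw [← exp_add]; ring_nf
    _ ≤ exp 1 * (1 - x / exp 1) := by gcongr
    _ = exp 1 - x := by field_simp

theorem stmt_15 (x : ℝ) (hx : x ∈ Set.Icc (0:ℝ) 1) :
    (Real.exp 1 - x) * Real.exp (-(Real.exp 1 - x) / Real.exp 1) ≥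
      Real.exp (-x / Real.exp 1) := by
  obtain ⟨hx₀, hx₁⟩ := hx
  have hkey : exp (1 - 2 * x / exp 1) ≤ exp 1 - x :=
    exp_one_sub_two_mul_div_le hx₀ (by linarith [exp_one_gt_two])
  calc exp (-x / exp 1) = exp (1 - 2 * x / exp 1) * exp (-(exp 1 - x) / exp 1) := by
        rw [← exp_add]; congr 1; field_simp; ring
    _ ≤ (exp 1 - x) * exp (-(exp 1 - x) / exp 1) := by gcongr
end

section
/- Let a be the unique root in (1,e) of (1-ln a)/a = 1/e and ψ(x) = 1 - (1-x)·a^x. Then for all y ∈ (0,1], (1/y)·ψ(y·e^{1-y}/(2·(1-y)^{1-y})) ≤ 1. -/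
/-!
Write `x` for the argument of `ψ`. Since `a^x ≥ 1 + x log a`, on `[0, 1]` we have
`ψ x ≤ x (1 - log a + x log a)`, and the equation `(1 - log a) e = a` forces `log a ≥ 0.43`
(because `0.57 e^0.57 > 1`), so `ψ x ≤ x (0.57 + 0.43 x)`. On the other side
`u^u ≥ exp ((u² - 1) / 2)` on `[0, 1]` (also at `u = 0`, where `0^0 = 1`), which together with
`e < 2.72` and `exp t ≥ 1 + t + t²/2` gives `x ≤ 1.36 y / (1 + y²/2 + y⁴/8)`. What remains is a
polynomial inequality in `y`.
-/

open Real

lemma le_log_of_one_sub_log_div_eq {a : ℝ} (ha0 : 0 < a) (ha : (1 - log a) / a = 1 / exp 1) :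
    0.43 ≤ log a := by
  have hfix : (1 - log a) * exp 1 = exp (log a) := by
    rw [exp_log ha0]; field_simp at ha; linarith
  have he : exp 1 = exp 0.43 * exp 0.57 := by rw [← exp_add]; norm_num
  have h57 : 1.7633 ≤ exp 0.57 := by
    have := sum_le_exp_of_nonneg (x := 0.57) (by norm_num) 4
    norm_num [Finset.sum_range_succ, Nat.factorial] at this
    linarith
  by_contra! h
  have := exp_lt_exp.2 h
  nlinarith [exp_pos 0.43, exp_pos 1]

lemma sq_sub_one_div_two_le_mul_log {u : ℝ} (hu0 : 0 < u) (hu1 : u ≤ 1) :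
    (u ^ 2 - 1) / 2 ≤ u * log u := by
  have h := self_le_sinh_iff.2 (neg_nonneg.2 (log_nonpos hu0.le hu1))
  rw [sinh_eq, neg_neg, exp_neg, exp_log hu0] at h
  have : u * u⁻¹ = 1 := mul_inv_cancel₀ hu0.ne'
  nlinarith

lemma exp_sq_sub_one_div_two_le_rpow_self {u : ℝ} (hu0 : 0 ≤ u) (hu1 : u ≤ 1) :
    exp ((u ^ 2 - 1) / 2) ≤ u ^ u := by
  rcases hu0.eq_or_lt with rfl | hu0
  · rw [rpow_zero, exp_le_one_iff]; norm_num
  · rw [rpow_def_of_pos hu0, mul_comm]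
    exact exp_le_exp.2 (sq_sub_one_div_two_le_mul_log hu0 hu1)

lemma div_rpow_self_le {y : ℝ} (hy0 : 0 ≤ y) (hy1 : y ≤ 1) :
    y * exp (1 - y) / (2 * (1 - y) ^ (1 - y)) ≤ y / 2 * exp (1 - y ^ 2 / 2) := by
  have h := exp_sq_sub_one_div_two_le_rpow_self (sub_nonneg.2 hy1) (sub_le_self 1 hy0)
  calc y * exp (1 - y) / (2 * (1 - y) ^ (1 - y))
      ≤ y * exp (1 - y) / (2 * exp (((1 - y) ^ 2 - 1) / 2)) := by gcongr
    _ = y / 2 * exp (1 - y ^ 2 / 2) := by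
      rw [mul_div_mul_comm, ← exp_sub]; ring_nf

lemma exp_one_sub_sq_div_two_le (y : ℝ) :
    exp (1 - y ^ 2 / 2) ≤ 2.72 / (1 + y ^ 2 / 2 + y ^ 4 / 8) := by
  have hq := quadratic_le_exp_of_nonneg (div_nonneg (sq_nonneg y) zero_le_two)
  rw [le_div_iff₀ (by positivity)]
  calc exp (1 - y ^ 2 / 2) * (1 + y ^ 2 / 2 + y ^ 4 / 8)
      ≤ exp (1 - y ^ 2 / 2) * exp (y ^ 2 / 2) := by gcongr; linarith
    _ = exp 1 := by rw [← exp_add]; ring_nf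
    _ ≤ 2.72 := (exp_one_lt_d9.trans (by norm_num)).le

noncomputable def majorant (y : ℝ) : ℝ := 1.36 * y / (1 + y ^ 2 / 2 + y ^ 4 / 8)

lemma div_rpow_self_le_majorant {y : ℝ} (hy0 : 0 ≤ y) (hy1 : y ≤ 1) :
    y * exp (1 - y) / (2 * (1 - y) ^ (1 - y)) ≤ majorant y :=
  calc y * exp (1 - y) / (2 * (1 - y) ^ (1 - y)) ≤ y / 2 * exp (1 - y ^ 2 / 2) :=
        div_rpow_self_le hy0 hy1
    _ ≤ y / 2 * (2.72 / (1 + y ^ 2 / 2 + y ^ 4 / 8)) := by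
        gcongr; exact exp_one_sub_sq_div_two_le y
    _ = majorant y := by unfold majorant; ring

lemma majorant_le_one {y : ℝ} (hy0 : 0 ≤ y) : majorant y ≤ 1 := by
  rw [majorant, div_le_one (by positivity)]
  nlinarith [sq_nonneg (y - 1.36), pow_nonneg hy0 4]

lemma majorant_mul_le {y : ℝ} (hy0 : 0 ≤ y) :
    majorant y * (0.57 + 0.43 * majorant y) ≤ y := by
  set D := 1 + y ^ 2 / 2 + y ^ 4 / 8 with hD
  have hD0 : 0 < D := by positivity
  have hpoly : 0.7752 * D + 0.795328 * y ≤ D ^ 2 := by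
    nlinarith [sq_nonneg (y - 1 / 2), sq_nonneg (y ^ 2 - 1 / 4), sq_nonneg ((y ^ 2 - 1 / 2) * y)]
  have hexp : majorant y * (0.57 + 0.43 * majorant y)
      = 1.36 * y * (0.57 * D + 0.5848 * y) / D ^ 2 := by
    rw [majorant, ← hD]; field_simp; ring
  rw [hexp, div_le_iff₀ (by positivity)]
  nlinarith [mul_le_mul_of_nonneg_left hpoly hy0]

lemma one_sub_mul_rpow_le {a c x : ℝ} (ha : 0 < a) (hc : c ≤ log a) (hx0 : 0 ≤ x)
    (hx1 : x ≤ 1) :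
    1 - (1 - x) * a ^ x ≤ x * (1 - c + c * x) := by
  have h : 1 + x * log a ≤ a ^ x := by
    rw [rpow_def_of_pos ha, mul_comm]; exact add_one_le_exp _ |>.trans' (by linarith)
  nlinarith [mul_le_mul_of_nonneg_left h (sub_nonneg.2 hx1), mul_nonneg hx0 (sub_nonneg.2 hx1)]

theorem stmt_17_general (a : ℝ) (ha1 : 1 < a)
    (ha : (1 - Real.log a) / a = 1 / Real.exp 1)
    (ψ : ℝ → ℝ) (hψ : ∀ x, ψ x = 1 - (1 - x) * a ^ x) :
    ∀ y ∈ Set.Ioc (0:ℝ) 1,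
      (1 / y) * ψ (y * Real.exp (1 - y) / (2 * (1 - y) ^ (1 - y))) ≤ 1 := by
  rintro y ⟨hy0, hy1⟩
  set x := y * exp (1 - y) / (2 * (1 - y) ^ (1 - y))
  have ha0 : 0 < a := one_pos.trans ha1
  have hx0 : 0 ≤ x :=
    div_nonneg (by positivity) (mul_nonneg zero_le_two (rpow_nonneg (sub_nonneg.2 hy1) _))
  have hxw : x ≤ majorant y := div_rpow_self_le_majorant hy0.le hy1
  have hψx : ψ x ≤ x * (0.57 + 0.43 * x) := by
    rw [hψ]
    convert one_sub_mul_rpow_le ha0 (le_log_of_one_sub_log_div_eq ha0 ha) hx0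
      (hxw.trans (majorant_le_one hy0.le)) using 2
    norm_num
  rw [one_div, inv_mul_le_iff₀ hy0, mul_one]
  calc ψ x ≤ x * (0.57 + 0.43 * x) := hψx
    _ ≤ majorant y * (0.57 + 0.43 * majorant y) := by gcongr; exact hx0.trans hxw
    _ ≤ y := majorant_mul_le hy0.le

theorem stmt_17 (a : ℝ) (ha1 : 1 < a) (ha2 : a < Real.exp 1)
    (ha : (1 - Real.log a) / a = 1 / Real.exp 1)
    (ψ : ℝ → ℝ) (hψ : ∀ x, ψ x = 1 - (1 - x) * a ^ x) :
    ∀ y ∈ Set.Ioc (0:ℝ) 1,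
      (1 / y) * ψ (y * Real.exp (1 - y) / (2 * (1 - y) ^ (1 - y))) ≤ 1 :=
  stmt_17_general a ha1 ha ψ hψ
end
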